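/- Every smooth positive solution of the cross-diffusion system on [0,T] with potentials V, W ∈ C³(𝕋) satisfies, for every t ∈ [0,T], the entropy dissipation identity (d/dt) ∫_𝕋 (ρ log ρ + μ log μ)(t,x) dx + ∫_𝕋 α S(t,x)^{α−2} (∂_x S(t,x))² dx = ∫_𝕋 (ρ(t,x) ∂_{xx}V(x) + μ(t,x) ∂_{xx}W(x)) dx, where S = ρ + μ. -/

import Mathlib

open MeasureTheory Real Set Filter
open scoped ContDiff

noncomputable section

/-- Partial derivative with respect to the time variable (first argument). -/
def pt (f : ℝ → ℝ → ℝ) (t x : ℝ) : ℝ := deriv (fun s => f s x) t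

/-- Partial derivative with respect to the space variable (second argument). -/
def px (f : ℝ → ℝ → ℝ) (t x : ℝ) : ℝ := deriv (fun y => f t y) x

/-- A smooth positive solution of the cross-diffusion system
`∂ₜρ = ∂ₓ(ρ·αS^(α-2)∂ₓS) + ∂ₓ(ρ∂ₓV)`, `∂ₜμ = ∂ₓ(μ·αS^(α-2)∂ₓS) + ∂ₓ(μ∂ₓW)` (S = ρ+μ)
on [0,T]×𝕋, where the torus 𝕋 = ℝ/ℤ is modeled by 1-periodic functions on ℝ. -/
structure CrossDiffSol (T α : ℝ) (V W : ℝ → ℝ) (ρ μ : ℝ → ℝ → ℝ) : Prop where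
  smooth_rho : ContDiff ℝ (⊤ : ℕ∞) (Function.uncurry ρ)
  smooth_mu : ContDiff ℝ (⊤ : ℕ∞) (Function.uncurry μ)
  periodic_rho : ∀ t, Function.Periodic (ρ t) 1
  periodic_mu : ∀ t, Function.Periodic (μ t) 1
  pos_rho : ∀ t x, 0 < ρ t x
  pos_mu : ∀ t x, 0 < μ t x
  smooth_V : ContDiff ℝ 3 V
  smooth_W : ContDiff ℝ 3 W
  periodic_V : Function.Periodic V 1
  periodic_W : Function.Periodic W 1
  eq_rho : ∀ t ∈ Set.Icc (0:ℝ) T, ∀ x : ℝ,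
    pt ρ t x =
      px (fun s y => ρ s y * (α * (ρ s y + μ s y) ^ (α - 2) *
        px (fun s' y' => ρ s' y' + μ s' y') s y)) t x
      + px (fun s y => ρ s y * deriv V y) t x
  eq_mu : ∀ t ∈ Set.Icc (0:ℝ) T, ∀ x : ℝ,
    pt μ t x =
      px (fun s y => μ s y * (α * (ρ s y + μ s y) ^ (α - 2) *
        px (fun s' y' => ρ s' y' + μ s' y') s y)) t x
      + px (fun s y => μ s y * deriv W y) t x

/- ## Auxiliary lemmas -/

lemma slice_t_hasDerivAt {F : ℝ × ℝ → ℝ} (hF : ContDiff ℝ (⊤ : ℕ∞) F) (t x : ℝ) :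
    HasDerivAt (fun s => F (s, x)) (fderiv ℝ F (t, x) (1, 0)) t := by
  have h1 : HasDerivAt (fun s : ℝ => (s, x)) ((1:ℝ), (0:ℝ)) t := by
    simpa using ((hasDerivAt_id t).prodMk (hasDerivAt_const t x))
  exact ((hF.differentiable (by simp) (t, x)).hasFDerivAt).comp_hasDerivAt t h1

lemma pt_eq_fderiv {f : ℝ → ℝ → ℝ} (hf : ContDiff ℝ (⊤ : ℕ∞) (Function.uncurry f)) (t x : ℝ) :
    pt f t x = fderiv ℝ (Function.uncurry f) (t, x) (1, 0) :=
  (slice_t_hasDerivAt hf t x).deriv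

lemma hasDerivAt_pt {f : ℝ → ℝ → ℝ} (hf : ContDiff ℝ (⊤ : ℕ∞) (Function.uncurry f)) (t x : ℝ) :
    HasDerivAt (fun s => f s x) (pt f t x) t := by
  rw [pt_eq_fderiv hf]
  exact slice_t_hasDerivAt hf t x

lemma continuous_pt {f : ℝ → ℝ → ℝ} (hf : ContDiff ℝ (⊤ : ℕ∞) (Function.uncurry f)) :
    Continuous (fun p : ℝ × ℝ => pt f p.1 p.2) := by
  have : (fun p : ℝ × ℝ => pt f p.1 p.2)
      = fun p : ℝ × ℝ => fderiv ℝ (Function.uncurry f) p ((1:ℝ), (0:ℝ)) := by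
    funext p
    exact pt_eq_fderiv hf p.1 p.2
  rw [this]
  exact (hf.continuous_fderiv (by simp)).clm_apply continuous_const

lemma slice_x_contDiff {f : ℝ → ℝ → ℝ} (hf : ContDiff ℝ (⊤ : ℕ∞) (Function.uncurry f)) (t : ℝ) :
    ContDiff ℝ ∞ (fun y => f t y) :=
  (hf.of_le (by simp)).comp (contDiff_const.prodMk contDiff_id)

lemma periodic_deriv' {f : ℝ → ℝ} (hf : Function.Periodic f 1) :
    Function.Periodic (deriv f) 1 := by
  intro x
  have : (fun y : ℝ => f (y + 1)) = f := funext fun y => hf y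
  rw [← deriv_comp_add_const, this]

lemma integral_deriv_periodic {g : ℝ → ℝ} (hg : Differentiable ℝ g)
    (hg' : Continuous (deriv g)) (hp : Function.Periodic g 1) :
    ∫ x in (0:ℝ)..1, deriv g x = 0 := by
  rw [intervalIntegral.integral_deriv_eq_sub (fun x _ => hg x)
    (hg'.intervalIntegrable 0 1)]
  have := hp 0; simp at this; rw [this]; ring

/-- Integration by parts for 1-periodic C¹ functions. -/
lemma parts {g h : ℝ → ℝ} (hg : Differentiable ℝ g) (hh : Differentiable ℝ h)
    (hg' : Continuous (deriv g)) (hh' : Continuous (deriv h))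
    (pg : Function.Periodic g 1) (ph : Function.Periodic h 1) :
    ∫ x in (0:ℝ)..1, deriv g x * h x = - ∫ x in (0:ℝ)..1, g x * deriv h x := by
  have hdiff : Differentiable ℝ (fun x => g x * h x) := hg.mul hh
  have hder : ∀ x, deriv (fun x => g x * h x) x = deriv g x * h x + g x * deriv h x := by
    intro x
    exact ((hg x).hasDerivAt.mul (hh x).hasDerivAt).deriv
  have h0 : ∫ x in (0:ℝ)..1, (deriv g x * h x + g x * deriv h x) = 0 := by
    rw [← intervalIntegral.integral_congr (fun x _ => (hder x))]
    exact integral_deriv_periodic hdiff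
      (by simpa only [funext hder] using (show Continuous (fun x => deriv g x * h x + g x * deriv h x)
        from (hg'.mul hh.continuous).add (hg.continuous.mul hh'))) (pg.mul ph)
  have hi1 : IntervalIntegrable (fun x => deriv g x * h x) volume 0 1 :=
    (hg'.mul hh.continuous).intervalIntegrable 0 1
  have hi2 : IntervalIntegrable (fun x => g x * deriv h x) volume 0 1 :=
    (hg.continuous.mul hh').intervalIntegrable 0 1
  rw [intervalIntegral.integral_add hi1 hi2] at h0
  linarith

/-- Differentiation under the integral sign over [0,1]. -/
lemma hasDerivAt_integral_param {E D : ℝ → ℝ → ℝ}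
    (hEc : Continuous (Function.uncurry E))
    (hDc : Continuous (Function.uncurry D))
    (hder : ∀ s x, HasDerivAt (fun u => E u x) (D s x) s) (t : ℝ) :
    HasDerivAt (fun s => ∫ x in (0:ℝ)..1, E s x) (∫ x in (0:ℝ)..1, D t x) t := by
  obtain ⟨C, hC⟩ : ∃ C, ∀ p ∈ (Icc (t-1) (t+1) ×ˢ Icc (-1:ℝ) 2),
      ‖Function.uncurry D p‖ ≤ C :=
    ((isCompact_Icc.prod isCompact_Icc).exists_bound_of_continuousOn hDc.continuousOn)
  have key := intervalIntegral.hasDerivAt_integral_of_dominated_loc_of_deriv_le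
    (F := fun s x => E s x) (F' := fun s x => D s x) (x₀ := t)
    (a := (0:ℝ)) (b := 1) (μ := volume) (bound := fun _ => C)
    (s := Metric.ball t 1) (Metric.ball_mem_nhds t one_pos)
    (Filter.Eventually.of_forall (fun s =>
      (hEc.comp (continuous_const.prodMk continuous_id)).aestronglyMeasurable))
    ((hEc.comp (continuous_const.prodMk continuous_id)).intervalIntegrable 0 1)
    ((hDc.comp (continuous_const.prodMk continuous_id)).aestronglyMeasurable)
    (Filter.Eventually.of_forall (fun x hx s hs => by
      have hx' : x ∈ Icc (-1:ℝ) 2 := by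
        rcases hx with ⟨h1, h2⟩
        simp only [min_def, max_def] at h1 h2
        norm_num at h1 h2
        constructor <;> linarith
      have hs' : s ∈ Icc (t-1) (t+1) := by
        rw [Metric.mem_ball, Real.dist_eq, abs_lt] at hs
        constructor <;> linarith [hs.1, hs.2]
      exact hC (s, x) (Set.mk_mem_prod hs' hx')))
    (intervalIntegrable_const)
    (Filter.Eventually.of_forall (fun x _ s _ => hder s x))
  exact key.2

/-- Entropy dissipation identity:
`(d/dt)∫ (ρ log ρ + μ log μ) + ∫ αS^(α-2)(∂ₓS)² = ∫ (ρ ∂ₓₓV + μ ∂ₓₓW)` on [0,T]. -/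
theorem entropy_dissipation (T α : ℝ) (hT : 0 < T) (hα : 0 < α) (hα1 : α ≤ 1)
    (V W : ℝ → ℝ) (ρ μ : ℝ → ℝ → ℝ) (hsol : CrossDiffSol T α V W ρ μ) :
    ∀ t ∈ Set.Icc (0:ℝ) T,
      deriv (fun s => ∫ x in (0:ℝ)..1,
          (ρ s x * Real.log (ρ s x) + μ s x * Real.log (μ s x))) t
        + (∫ x in (0:ℝ)..1, α * (ρ t x + μ t x) ^ (α - 2) *
            (px (fun s y => ρ s y + μ s y) t x) ^ 2)
      = ∫ x in (0:ℝ)..1,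
          (ρ t x * deriv (deriv V) x + μ t x * deriv (deriv W) x) := by
  intro t ht
  have h1le : (1 : WithTop ℕ∞) ≤ ∞ := by exact_mod_cast le_top
  have h2le : (1 : WithTop ℕ∞) ≤ 2 := by exact_mod_cast one_le_two
  -- basic regularity of slices at time t
  have hrC : ContDiff ℝ ∞ (fun y => ρ t y) := slice_x_contDiff hsol.smooth_rho t
  have hmC : ContDiff ℝ ∞ (fun y => μ t y) := slice_x_contDiff hsol.smooth_mu t
  have hsC : ContDiff ℝ ∞ (fun y => ρ t y + μ t y) := hrC.add hmC
  have hs0 : ∀ y, (0:ℝ) < ρ t y + μ t y := fun y => add_pos (hsol.pos_rho t y) (hsol.pos_mu t y)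
  have hdrC : ContDiff ℝ ∞ (deriv (fun y => ρ t y)) := (contDiff_infty_iff_deriv.mp hrC).2
  have hdmC : ContDiff ℝ ∞ (deriv (fun y => μ t y)) := (contDiff_infty_iff_deriv.mp hmC).2
  have hdsC : ContDiff ℝ ∞ (deriv (fun y => ρ t y + μ t y)) :=
    (contDiff_infty_iff_deriv.mp hsC).2
  have hrD : Differentiable ℝ (fun y => ρ t y) := hrC.differentiable (by simp)
  have hmD : Differentiable ℝ (fun y => μ t y) := hmC.differentiable (by simp)
  have hsD : Differentiable ℝ (fun y => ρ t y + μ t y) := hsC.differentiable (by simp)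
  have hwC : ContDiff ℝ ∞ (fun y => (ρ t y + μ t y) ^ (α - 2)) :=
    contDiff_iff_contDiffAt.2 fun y =>
      (Real.contDiffAt_rpow_const_of_ne (p := α - 2) (ne_of_gt (hs0 y))).comp (g := fun x : ℝ => x ^ (α - 2)) y hsC.contDiffAt
  have hdV : ContDiff ℝ 2 (deriv V) := by
    have h3 : ContDiff ℝ ((2:WithTop ℕ∞)+1) V := by norm_num; exact hsol.smooth_V
    exact (contDiff_succ_iff_deriv.mp h3).2.2
  have hddV : ContDiff ℝ 1 (deriv (deriv V)) := by
    have h2 : ContDiff ℝ ((1:WithTop ℕ∞)+1) (deriv V) := by norm_num; exact hdV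
    exact (contDiff_succ_iff_deriv.mp h2).2.2
  have hdW : ContDiff ℝ 2 (deriv W) := by
    have h3 : ContDiff ℝ ((2:WithTop ℕ∞)+1) W := by norm_num; exact hsol.smooth_W
    exact (contDiff_succ_iff_deriv.mp h3).2.2
  have hddW : ContDiff ℝ 1 (deriv (deriv W)) := by
    have h2 : ContDiff ℝ ((1:WithTop ℕ∞)+1) (deriv W) := by norm_num; exact hdW
    exact (contDiff_succ_iff_deriv.mp h2).2.2
  -- periodicity
  have ps : Function.Periodic (fun y => ρ t y + μ t y) 1 :=
    (hsol.periodic_rho t).add (hsol.periodic_mu t)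
  have pds : Function.Periodic (deriv (fun y => ρ t y + μ t y)) 1 := periodic_deriv' ps
  have pdV : Function.Periodic (deriv V) 1 := periodic_deriv' hsol.periodic_V
  have pdW : Function.Periodic (deriv W) 1 := periodic_deriv' hsol.periodic_W
  -- the entropy production terms
  have hlogr : ContDiff ℝ ∞ (fun y => Real.log (ρ t y) + 1) :=
    (contDiff_iff_contDiffAt.2 fun y =>
      (Real.contDiffAt_log.2 (ne_of_gt (hsol.pos_rho t y))).comp y hrC.contDiffAt).add
      contDiff_const
  have hlogm : ContDiff ℝ ∞ (fun y => Real.log (μ t y) + 1) :=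
    (contDiff_iff_contDiffAt.2 fun y =>
      (Real.contDiffAt_log.2 (ne_of_gt (hsol.pos_mu t y))).comp y hmC.contDiffAt).add
      contDiff_const
  have hdh1 : ∀ y, deriv (fun y => Real.log (ρ t y) + 1) y
      = deriv (fun y' => ρ t y') y / ρ t y := by
    intro y
    exact (((hrD y).hasDerivAt.log (ne_of_gt (hsol.pos_rho t y))).add_const 1).deriv
  have hdh2 : ∀ y, deriv (fun y => Real.log (μ t y) + 1) y
      = deriv (fun y' => μ t y') y / μ t y := by
    intro y
    exact (((hmD y).hasDerivAt.log (ne_of_gt (hsol.pos_mu t y))).add_const 1).deriv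
  -- Step A : differentiation under the integral sign
  have cρ : Continuous (Function.uncurry ρ) := hsol.smooth_rho.continuous
  have cμ : Continuous (Function.uncurry μ) := hsol.smooth_mu.continuous
  have hEc : Continuous (Function.uncurry (fun s x =>
      ρ s x * Real.log (ρ s x) + μ s x * Real.log (μ s x))) := by
    show Continuous fun p : ℝ × ℝ =>
      ρ p.1 p.2 * Real.log (ρ p.1 p.2) + μ p.1 p.2 * Real.log (μ p.1 p.2)
    exact (cρ.mul (cρ.log fun p => ne_of_gt (hsol.pos_rho p.1 p.2))).add
      (cμ.mul (cμ.log fun p => ne_of_gt (hsol.pos_mu p.1 p.2)))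
  have hDc : Continuous (Function.uncurry (fun s x =>
      pt ρ s x * (Real.log (ρ s x) + 1) + pt μ s x * (Real.log (μ s x) + 1))) := by
    show Continuous fun p : ℝ × ℝ =>
      pt ρ p.1 p.2 * (Real.log (ρ p.1 p.2) + 1) + pt μ p.1 p.2 * (Real.log (μ p.1 p.2) + 1)
    exact ((continuous_pt hsol.smooth_rho).mul
        ((cρ.log fun p => ne_of_gt (hsol.pos_rho p.1 p.2)).add continuous_const)).add
      ((continuous_pt hsol.smooth_mu).mul
        ((cμ.log fun p => ne_of_gt (hsol.pos_mu p.1 p.2)).add continuous_const))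
  have hEder : ∀ s x, HasDerivAt (fun u => ρ u x * Real.log (ρ u x) + μ u x * Real.log (μ u x))
      (pt ρ s x * (Real.log (ρ s x) + 1) + pt μ s x * (Real.log (μ s x) + 1)) s := by
    intro s x
    have h1 := hasDerivAt_pt hsol.smooth_rho s x
    have h2 := hasDerivAt_pt hsol.smooth_mu s x
    have hl1 := h1.log (ne_of_gt (hsol.pos_rho s x))
    have hl2 := h2.log (ne_of_gt (hsol.pos_mu s x))
    have := (h1.mul hl1).add (h2.mul hl2)
    refine this.congr_deriv ?_
    have hρne := ne_of_gt (hsol.pos_rho s x)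
    have hμne := ne_of_gt (hsol.pos_mu s x)
    field_simp
  have hDA := hasDerivAt_integral_param hEc hDc hEder t
  have hderivE : deriv (fun s => ∫ x in (0:ℝ)..1,
      (ρ s x * Real.log (ρ s x) + μ s x * Real.log (μ s x))) t
      = ∫ x in (0:ℝ)..1,
        (pt ρ t x * (Real.log (ρ t x) + 1) + pt μ t x * (Real.log (μ t x) + 1)) := hDA.deriv
  -- Step B : fluxes at time t
  have hA1C : ContDiff ℝ ∞ (fun y => ρ t y * (α * (ρ t y + μ t y) ^ (α - 2) *
      deriv (fun y' => ρ t y' + μ t y') y)) :=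
    hrC.mul ((contDiff_const.mul hwC).mul hdsC)
  have hA2C : ContDiff ℝ ∞ (fun y => μ t y * (α * (ρ t y + μ t y) ^ (α - 2) *
      deriv (fun y' => ρ t y' + μ t y') y)) :=
    hmC.mul ((contDiff_const.mul hwC).mul hdsC)
  have hB1C : ContDiff ℝ 1 (fun y => ρ t y * deriv V y) :=
    (hrC.of_le h1le).mul (hdV.of_le h2le)
  have hB2C : ContDiff ℝ 1 (fun y => μ t y * deriv W y) :=
    (hmC.of_le h1le).mul (hdW.of_le h2le)
  have hg1C : ContDiff ℝ 1 (fun y => ρ t y * (α * (ρ t y + μ t y) ^ (α - 2) *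
      deriv (fun y' => ρ t y' + μ t y') y) + ρ t y * deriv V y) :=
    (hA1C.of_le h1le).add hB1C
  have hg2C : ContDiff ℝ 1 (fun y => μ t y * (α * (ρ t y + μ t y) ^ (α - 2) *
      deriv (fun y' => ρ t y' + μ t y') y) + μ t y * deriv W y) :=
    (hA2C.of_le h1le).add hB2C
  -- PDE at time t, in terms of space derivatives of the total fluxes
  have hptρ : ∀ x, pt ρ t x = deriv (fun y => ρ t y * (α * (ρ t y + μ t y) ^ (α - 2) *
      deriv (fun y' => ρ t y' + μ t y') y) + ρ t y * deriv V y) x := by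
    intro x
    have hpde := hsol.eq_rho t ht x
    simp only [px] at hpde
    rw [hpde]
    exact (deriv_add ((hA1C.differentiable (by simp)) x) ((hB1C.differentiable (by simp)) x)).symm
  have hptμ : ∀ x, pt μ t x = deriv (fun y => μ t y * (α * (ρ t y + μ t y) ^ (α - 2) *
      deriv (fun y' => ρ t y' + μ t y') y) + μ t y * deriv W y) x := by
    intro x
    have hpde := hsol.eq_mu t ht x
    simp only [px] at hpde
    rw [hpde]
    exact (deriv_add ((hA2C.differentiable (by simp)) x) ((hB2C.differentiable (by simp)) x)).symm
  -- periodicity of the fluxes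
  have pg1 : Function.Periodic (fun y => ρ t y * (α * (ρ t y + μ t y) ^ (α - 2) *
      deriv (fun y' => ρ t y' + μ t y') y) + ρ t y * deriv V y) 1 := by
    intro y
    simp only
    rw [hsol.periodic_rho t y, hsol.periodic_mu t y, pds y, pdV y]
  have pg2 : Function.Periodic (fun y => μ t y * (α * (ρ t y + μ t y) ^ (α - 2) *
      deriv (fun y' => ρ t y' + μ t y') y) + μ t y * deriv W y) 1 := by
    intro y
    simp only
    rw [hsol.periodic_rho t y, hsol.periodic_mu t y, pds y, pdW y]
  have ph1 : Function.Periodic (fun y => Real.log (ρ t y) + 1) 1 := by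
    intro y; simp only; rw [hsol.periodic_rho t y]
  have ph2 : Function.Periodic (fun y => Real.log (μ t y) + 1) 1 := by
    intro y; simp only; rw [hsol.periodic_mu t y]
  -- Integration by parts for the ρ part
  have partsρ : ∫ x in (0:ℝ)..1, pt ρ t x * (Real.log (ρ t x) + 1)
      = - ∫ x in (0:ℝ)..1,
          (ρ t x * (α * (ρ t x + μ t x) ^ (α - 2) * deriv (fun y' => ρ t y' + μ t y') x)
            + ρ t x * deriv V x)
          * deriv (fun y => Real.log (ρ t y) + 1) x := by
    rw [intervalIntegral.integral_congr (g := fun x =>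
      deriv (fun y => ρ t y * (α * (ρ t y + μ t y) ^ (α - 2) *
        deriv (fun y' => ρ t y' + μ t y') y) + ρ t y * deriv V y) x * (Real.log (ρ t x) + 1))
      (fun x _ => by rw [hptρ x])]
    exact parts (hg1C.differentiable (by simp)) (hlogr.differentiable (by simp))
      (contDiff_one_iff_deriv.mp hg1C).2
      ((contDiff_infty_iff_deriv.mp hlogr).2.continuous) pg1 ph1
  have partsμ : ∫ x in (0:ℝ)..1, pt μ t x * (Real.log (μ t x) + 1)
      = - ∫ x in (0:ℝ)..1,
          (μ t x * (α * (ρ t x + μ t x) ^ (α - 2) * deriv (fun y' => ρ t y' + μ t y') x)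
            + μ t x * deriv W x)
          * deriv (fun y => Real.log (μ t y) + 1) x := by
    rw [intervalIntegral.integral_congr (g := fun x =>
      deriv (fun y => μ t y * (α * (ρ t y + μ t y) ^ (α - 2) *
        deriv (fun y' => ρ t y' + μ t y') y) + μ t y * deriv W y) x * (Real.log (μ t x) + 1))
      (fun x _ => by rw [hptμ x])]
    exact parts (hg2C.differentiable (by simp)) (hlogm.differentiable (by simp))
      (contDiff_one_iff_deriv.mp hg2C).2
      ((contDiff_infty_iff_deriv.mp hlogm).2.continuous) pg2 ph2
  -- pointwise simplification of the boundary terms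
  have simpρ : ∀ x, (ρ t x * (α * (ρ t x + μ t x) ^ (α - 2) *
        deriv (fun y' => ρ t y' + μ t y') x) + ρ t x * deriv V x)
      * deriv (fun y => Real.log (ρ t y) + 1) x
      = α * (ρ t x + μ t x) ^ (α - 2) * deriv (fun y' => ρ t y' + μ t y') x
          * deriv (fun y => ρ t y) x
        + deriv V x * deriv (fun y => ρ t y) x := by
    intro x
    rw [hdh1 x]
    have hne := ne_of_gt (hsol.pos_rho t x)
    field_simp
  have simpμ : ∀ x, (μ t x * (α * (ρ t x + μ t x) ^ (α - 2) *
        deriv (fun y' => ρ t y' + μ t y') x) + μ t x * deriv W x)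
      * deriv (fun y => Real.log (μ t y) + 1) x
      = α * (ρ t x + μ t x) ^ (α - 2) * deriv (fun y' => ρ t y' + μ t y') x
          * deriv (fun y => μ t y) x
        + deriv W x * deriv (fun y => μ t y) x := by
    intro x
    rw [hdh2 x]
    have hne := ne_of_gt (hsol.pos_mu t x)
    field_simp
  -- continuity facts for integrability
  have cw : Continuous (fun y => α * (ρ t y + μ t y) ^ (α - 2)) :=
    (contDiff_const.mul hwC).continuous
  have cds : Continuous (deriv (fun y => ρ t y + μ t y)) := hdsC.continuous
  have cdr : Continuous (deriv (fun y => ρ t y)) := hdrC.continuous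
  have cdm : Continuous (deriv (fun y => μ t y)) := hdmC.continuous
  have cdV : Continuous (deriv V) := hdV.continuous
  have cdW : Continuous (deriv W) := hdW.continuous
  have iQρ : IntervalIntegrable (fun x => α * (ρ t x + μ t x) ^ (α - 2) *
      deriv (fun y' => ρ t y' + μ t y') x * deriv (fun y => ρ t y) x) volume 0 1 :=
    ((cw.mul cds).mul cdr).intervalIntegrable 0 1
  have iQμ : IntervalIntegrable (fun x => α * (ρ t x + μ t x) ^ (α - 2) *
      deriv (fun y' => ρ t y' + μ t y') x * deriv (fun y => μ t y) x) volume 0 1 :=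
    ((cw.mul cds).mul cdm).intervalIntegrable 0 1
  have iVρ : IntervalIntegrable (fun x => deriv V x * deriv (fun y => ρ t y) x) volume 0 1 :=
    (cdV.mul cdr).intervalIntegrable 0 1
  have iWμ : IntervalIntegrable (fun x => deriv W x * deriv (fun y => μ t y) x) volume 0 1 :=
    (cdW.mul cdm).intervalIntegrable 0 1
  -- second integration by parts: potential terms
  have partsV : ∫ x in (0:ℝ)..1, deriv (fun y => ρ t y) x * deriv V x
      = - ∫ x in (0:ℝ)..1, ρ t x * deriv (deriv V) x :=
    parts hrD (hdV.differentiable (by simp)) cdr hddV.continuous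
      (hsol.periodic_rho t) pdV
  have partsW : ∫ x in (0:ℝ)..1, deriv (fun y => μ t y) x * deriv W x
      = - ∫ x in (0:ℝ)..1, μ t x * deriv (deriv W) x :=
    parts hmD (hdW.differentiable (by simp)) cdm hddW.continuous
      (hsol.periodic_mu t) pdW
  -- combine for the ρ part
  have Eρ : ∫ x in (0:ℝ)..1, pt ρ t x * (Real.log (ρ t x) + 1)
      = - (∫ x in (0:ℝ)..1, α * (ρ t x + μ t x) ^ (α - 2) *
          deriv (fun y' => ρ t y' + μ t y') x * deriv (fun y => ρ t y) x)
        + ∫ x in (0:ℝ)..1, ρ t x * deriv (deriv V) x := by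
    rw [partsρ, intervalIntegral.integral_congr (fun x _ => simpρ x),
      intervalIntegral.integral_add iQρ iVρ,
      intervalIntegral.integral_congr (g := fun x => deriv (fun y => ρ t y) x * deriv V x)
        (fun x _ => mul_comm _ _), partsV]
    ring
  have Eμ : ∫ x in (0:ℝ)..1, pt μ t x * (Real.log (μ t x) + 1)
      = - (∫ x in (0:ℝ)..1, α * (ρ t x + μ t x) ^ (α - 2) *
          deriv (fun y' => ρ t y' + μ t y') x * deriv (fun y => μ t y) x)
        + ∫ x in (0:ℝ)..1, μ t x * deriv (deriv W) x := by
    rw [partsμ, intervalIntegral.integral_congr (fun x _ => simpμ x),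
      intervalIntegral.integral_add iQμ iWμ,
      intervalIntegral.integral_congr (g := fun x => deriv (fun y => μ t y) x * deriv W x)
        (fun x _ => mul_comm _ _), partsW]
    ring
  -- the dissipation integral splits
  have hds : ∀ x, deriv (fun y => ρ t y + μ t y) x
      = deriv (fun y => ρ t y) x + deriv (fun y => μ t y) x := by
    intro x
    exact deriv_add (hrD x) (hmD x)
  have hQsplit : ∫ x in (0:ℝ)..1, α * (ρ t x + μ t x) ^ (α - 2) *
        (deriv (fun y => ρ t y + μ t y) x) ^ 2
      = (∫ x in (0:ℝ)..1, α * (ρ t x + μ t x) ^ (α - 2) *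
          deriv (fun y' => ρ t y' + μ t y') x * deriv (fun y => ρ t y) x)
        + ∫ x in (0:ℝ)..1, α * (ρ t x + μ t x) ^ (α - 2) *
          deriv (fun y' => ρ t y' + μ t y') x * deriv (fun y => μ t y) x := by
    rw [← intervalIntegral.integral_add iQρ iQμ]
    refine intervalIntegral.integral_congr (fun x _ => ?_)
    have := hds x
    simp only [this]
    ring
  -- split of the time-derivative integral
  have cptρ : Continuous (fun x => pt ρ t x * (Real.log (ρ t x) + 1)) := by
    have : Continuous (fun x => pt ρ t x) :=
      (continuous_pt hsol.smooth_rho).comp (continuous_const.prodMk continuous_id)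
    exact this.mul (((cρ.comp (continuous_const.prodMk continuous_id)).log
      (fun x => ne_of_gt (hsol.pos_rho t x))).add continuous_const)
  have cptμ : Continuous (fun x => pt μ t x * (Real.log (μ t x) + 1)) := by
    have : Continuous (fun x => pt μ t x) :=
      (continuous_pt hsol.smooth_mu).comp (continuous_const.prodMk continuous_id)
    exact this.mul (((cμ.comp (continuous_const.prodMk continuous_id)).log
      (fun x => ne_of_gt (hsol.pos_mu t x))).add continuous_const)
  have hDsplit : ∫ x in (0:ℝ)..1,
        (pt ρ t x * (Real.log (ρ t x) + 1) + pt μ t x * (Real.log (μ t x) + 1))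
      = (∫ x in (0:ℝ)..1, pt ρ t x * (Real.log (ρ t x) + 1))
        + ∫ x in (0:ℝ)..1, pt μ t x * (Real.log (μ t x) + 1) :=
    intervalIntegral.integral_add (cptρ.intervalIntegrable 0 1) (cptμ.intervalIntegrable 0 1)
  -- split of the right-hand side
  have hRsplit : ∫ x in (0:ℝ)..1,
        (ρ t x * deriv (deriv V) x + μ t x * deriv (deriv W) x)
      = (∫ x in (0:ℝ)..1, ρ t x * deriv (deriv V) x)
        + ∫ x in (0:ℝ)..1, μ t x * deriv (deriv W) x :=
    intervalIntegral.integral_add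
      ((hrC.continuous.mul hddV.continuous).intervalIntegrable 0 1)
      ((hmC.continuous.mul hddW.continuous).intervalIntegrable 0 1)
  -- conclusion
  show _ + (∫ x in (0:ℝ)..1, α * (ρ t x + μ t x) ^ (α - 2) *
      (deriv (fun y => ρ t y + μ t y) x) ^ 2) = _
  rw [hderivE, hDsplit, Eρ, Eμ, hQsplit, hRsplit]
  ring
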